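/- For both OneMinMax and LOTZ, if the reference point (r₁, r₂) satisfies r₁ ≤ −1 and r₂ ≤ −1, then the hypervolume contribution HVC(·, P) is diversity-favouring on {0,1}ⁿ \ {0ⁿ, 1ⁿ}: for every population P of mutually non-dominated points and all Pareto-optimal x, y ∈ P with x, y ∉ {0ⁿ, 1ⁿ}, if x is bad then HVC(x, P) = 1, and if y is good then HVC(y, P) > 1; in particular HVC(x, P) < HVC(y, P). -/

import Mathlib

noncomputable section
open scoped ENNReal
attribute [local instance] Classical.propDecidable

namespace EMO


/-- A bit string of length `n`. -/
abbrev BitString (n : ℕ) := Fin n → Bool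

/-- Number of one-bits. -/
def onesCount {n : ℕ} (x : BitString n) : ℕ :=
  (Finset.univ.filter fun i => x i = true).card

def allOnes (n : ℕ) : BitString n := fun _ => true
def allZeros (n : ℕ) : BitString n := fun _ => false

/-- The bi-objective function OneMinMax. -/
def OneMinMax {n : ℕ} (x : BitString n) : ℤ × ℤ :=
  ((onesCount x : ℤ), (n : ℤ) - (onesCount x : ℤ))

/-- Number of leading ones. -/
def leadingOnes {n : ℕ} (x : BitString n) : ℕ :=
  (Finset.univ.filter fun i : Fin n => ∀ j : Fin n, j ≤ i → x j = true).card

/-- Number of trailing zeros. -/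
def trailingZeros {n : ℕ} (x : BitString n) : ℕ :=
  (Finset.univ.filter fun i : Fin n => ∀ j : Fin n, i ≤ j → x j = false).card

/-- The bi-objective function LOTZ. -/
def LOTZ {n : ℕ} (x : BitString n) : ℤ × ℤ :=
  ((leadingOnes x : ℤ), (trailingZeros x : ℤ))

/-- `y` dominates `x` (maximisation). -/
def dominates {n : ℕ} (f : BitString n → ℤ × ℤ) (y x : BitString n) : Prop :=
  (f x).1 ≤ (f y).1 ∧ (f x).2 ≤ (f y).2 ∧ f x ≠ f y

/-- `y` weakly dominates `x` (maximisation). -/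
def weaklyDominates {n : ℕ} (f : BitString n → ℤ × ℤ) (y x : BitString n) : Prop :=
  (f x).1 ≤ (f y).1 ∧ (f x).2 ≤ (f y).2

/-- Pareto optimality. -/
def paretoOptimal {n : ℕ} (f : BitString n → ℤ × ℤ) (x : BitString n) : Prop :=
  ¬ ∃ y : BitString n, dominates f y x

/-- A population of mutually non-dominated points. -/
def mutuallyNonDominated {n : ℕ} (f : BitString n → ℤ × ℤ)
    (P : Finset (BitString n)) : Prop :=
  ∀ x ∈ P, ∀ y ∈ P, ¬ dominates f y x

/-- Flip bit `i` of `x`. -/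
def flipBit {n : ℕ} (x : BitString n) (i : Fin n) : BitString n :=
  Function.update x i (!x i)

/-- `y` is a Hamming neighbour of `x`. -/
def hammingNeighbour {n : ℕ} (x y : BitString n) : Prop :=
  ∃ i : Fin n, y = flipBit x i

/-- `x` is good relative to population `P`: it is Pareto optimal and has a Pareto-optimal
Hamming neighbour whose objective vector is not attained by any member of `P`. -/
def isGood {n : ℕ} (f : BitString n → ℤ × ℤ) (P : Finset (BitString n))
    (x : BitString n) : Prop :=
  paretoOptimal f x ∧
    ∃ y : BitString n, hammingNeighbour x y ∧ paretoOptimal f y ∧ ∀ z ∈ P, f z ≠ f y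

/-- `x` is bad relative to population `P`. -/
def isBad {n : ℕ} (f : BitString n → ℤ × ℤ) (P : Finset (BitString n))
    (x : BitString n) : Prop :=
  paretoOptimal f x ∧
    ¬ ∃ y : BitString n, hammingNeighbour x y ∧ paretoOptimal f y ∧ ∀ z ∈ P, f z ≠ f y

/-- `P` covers the whole Pareto front of `f`. -/
def coversFront {n : ℕ} (f : BitString n → ℤ × ℤ) (P : Finset (BitString n)) : Prop :=
  ∀ x : BitString n, paretoOptimal f x → ∃ z ∈ P, f z = f x

/-- The hypervolume contribution of `x` to `P` (for a population of mutually
non-dominated points, with reference point `r`). -/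
def HVC {n : ℕ} (f : BitString n → ℤ × ℤ) (r : ℤ × ℤ) (x : BitString n)
    (P : Finset (BitString n)) : ℤ :=
  ((f x).1 - (WithBot.unbotD r.1 ((P.filter fun z => (f z).1 < (f x).1).image fun z => (f z).1).max)) *
  ((f x).2 - (WithBot.unbotD r.2 ((P.filter fun z => (f z).2 < (f x).2).image fun z => (f z).2).max))

/-- Crowding distance of `x` in `P` with respect to a single objective `g`: infinite for the
boundary points, and otherwise the normalised difference between successor and predecessor. -/
def CDCobj {n : ℕ} (g : BitString n → ℤ) (x : BitString n)
    (P : Finset (BitString n)) : ℝ≥0∞ :=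
  if (∀ z ∈ P, g x ≤ g z) ∨ (∀ z ∈ P, g z ≤ g x) then ⊤
  else
    (((WithTop.untopD 0 ((P.filter fun z => g x < g z).image g).min -
        (WithBot.unbotD 0 ((P.filter fun z => g z < g x).image g).max)).toNat : ℝ≥0∞)) /
      (((WithBot.unbotD 0 (P.image g).max - (WithTop.untopD 0 (P.image g).min)).toNat : ℝ≥0∞))

/-- The crowding distance contribution of `x` to `P`. -/
def CDC {n : ℕ} (f : BitString n → ℤ × ℤ) (x : BitString n)
    (P : Finset (BitString n)) : ℝ≥0∞ :=
  CDCobj (fun z => (f z).1) x P + CDCobj (fun z => (f z).2) x P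

/-- A diversity measure `c` is diversity-favouring on `S`. -/
def diversityFavouring {n : ℕ} {α : Type*} [Preorder α] (f : BitString n → ℤ × ℤ)
    (c : BitString n → Finset (BitString n) → α) (S : Set (BitString n)) : Prop :=
  ∀ P : Finset (BitString n), mutuallyNonDominated f P →
    ∀ x ∈ P, ∀ y ∈ P, x ∈ S → y ∈ S → isBad f P x → isGood f P y → c x P < c y P

/-- The default bit string (used only to make selection kernels total). -/
def defaultBS (n : ℕ) : BitString n := fun _ => false

/-- Local mutation: flip a single uniformly random bit. -/
def localMutation {n : ℕ} (hn : 0 < n) (x : BitString n) : PMF (BitString n) :=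
  haveI : Nonempty (Fin n) := ⟨⟨0, hn⟩⟩
  (PMF.uniformOfFintype (Fin n)).map (flipBit x)

/-- A Bernoulli coin with success probability `1/n` (for `n ≥ 1`). -/
def bitFlipCoin (n : ℕ) : PMF Bool :=
  PMF.bernoulli (min ((n : ℝ≥0∞))⁻¹ 1).toNNReal
    (by simpa using ENNReal.toNNReal_mono ENNReal.one_ne_top (min_le_right ((n : ℝ≥0∞)⁻¹) 1))

/-- Global (standard bit) mutation: flip each bit independently with probability `1/n`. -/
def globalMutationAux {n : ℕ} : List (Fin n) → BitString n → PMF (BitString n)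
  | [], x => PMF.pure x
  | i :: is, x => (bitFlipCoin n).bind fun b =>
      globalMutationAux is (if b then flipBit x i else x)

def globalMutation {n : ℕ} (x : BitString n) : PMF (BitString n) :=
  globalMutationAux (List.finRange n) x

/-- Survival selection: if `s'` is not dominated by any member of `P`, add `s'` to `P` and
remove all members weakly dominated by `s'`. -/
def updatePop {n : ℕ} (f : BitString n → ℤ × ℤ) (P : Finset (BitString n))
    (s' : BitString n) : Finset (BitString n) :=
  if ∃ z ∈ P, dominates f z s' then P
  else insert s' (P.filter fun z => ¬ weaklyDominates f s' z)

/-- One iteration of (G)SEMO with parent-selection kernel `select` and mutation `mutate`. -/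
def step {n : ℕ} (f : BitString n → ℤ × ℤ)
    (select : Finset (BitString n) → PMF (BitString n))
    (mutate : BitString n → PMF (BitString n))
    (P : Finset (BitString n)) : PMF (Finset (BitString n)) :=
  (select P).bind fun s => (mutate s).map fun s' => updatePop f P s'

/-- The L-dominant attribute `L(x) = LO(x) + TZ(x)`. -/
def Ldom {n : ℕ} (x : BitString n) : ℕ := leadingOnes x + trailingZeros x

/-- The subpopulation of points with maximum L-dominant attribute. -/
def maxLSub {n : ℕ} (P : Finset (BitString n)) : Finset (BitString n) :=
  P.filter fun x => ∀ z ∈ P, Ldom z ≤ Ldom x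

/-- One iteration of the modified GSEMO: parent selection (and the diversity contribution)
is restricted to the subpopulation of points with maximum L-dominant attribute. -/
def stepMod {n : ℕ} (f : BitString n → ℤ × ℤ)
    (select : Finset (BitString n) → PMF (BitString n))
    (mutate : BitString n → PMF (BitString n))
    (P : Finset (BitString n)) : PMF (Finset (BitString n)) :=
  (select (maxLSub P)).bind fun s => (mutate s).map fun s' => updatePop f P s'

/-- Initial population: a single uniformly random bit string. -/
def initDist (n : ℕ) : PMF (Finset (BitString n)) :=
  (PMF.uniformOfFintype (BitString n)).map fun x => {x}

/-- Distribution of the population after `t` iterations. -/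
def stateDist {S : Type*} (init : PMF S) (st : S → PMF S) : ℕ → PMF S
  | 0 => init
  | t + 1 => (stateDist init st t).bind st

/-- Expected number of iterations until an (absorbing) goal predicate is reached,
expressed as `∑ₜ Pr[goal not yet reached at time t]`. -/
def expectedRuntime {S : Type*} (init : PMF S) (st : S → PMF S) (goal : S → Prop) : ℝ≥0∞ :=
  ∑' t : ℕ, (stateDist init st t).toOuterMeasure {s | ¬ goal s}

/-- Uniform parent selection. -/
def uniformSelect {n : ℕ} (P : Finset (BitString n)) : PMF (BitString n) :=
  if h : P.Nonempty then PMF.uniformOfFinset P h else PMF.pure (defaultBS n)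

/-- Highest Diversity Contribution (HDC) parent selection: select an individual with
maximum diversity contribution, ties broken uniformly at random. -/
def HDCSelect {n : ℕ} {α : Type*} [LinearOrder α]
    (c : BitString n → Finset (BitString n) → α)
    (P : Finset (BitString n)) : PMF (BitString n) :=
  if h : P.Nonempty then
    PMF.uniformOfFinset (P.filter fun x => ∀ y ∈ P, c y P ≤ c x P)
      (by
        obtain ⟨b, hb, hmax⟩ := P.exists_max_image (fun x => c x P) h
        exact ⟨b, Finset.mem_filter.mpr ⟨hb, hmax⟩⟩)
  else PMF.pure (defaultBS n)

/-- Non-Minimum Uniform at Random (NMUAR) parent selection: select uniformly at random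
among all individuals whose diversity contribution is not minimal (from the whole
population if all contributions are equal). -/
def NMUARSelect {n : ℕ} {α : Type*} [LinearOrder α]
    (c : BitString n → Finset (BitString n) → α)
    (P : Finset (BitString n)) : PMF (BitString n) :=
  if h : P.Nonempty then
    if hQ : (P.filter fun x => ∃ y ∈ P, c y P < c x P).Nonempty then
      PMF.uniformOfFinset _ hQ
    else PMF.uniformOfFinset P h
  else PMF.pure (defaultBS n)

/-- Tournament selection with tournament size `μ = |P|`: draw `μ` individuals uniformly at
random with replacement from `P` and select one with the highest diversity contribution
among the drawn multiset (ties broken uniformly at random). -/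
def tournamentSelect {n : ℕ} {α : Type*} [LinearOrder α]
    (c : BitString n → Finset (BitString n) → α)
    (P : Finset (BitString n)) : PMF (BitString n) :=
  if h : P.Nonempty then
    haveI : Nonempty {x // x ∈ P} := h.to_subtype
    (PMF.uniformOfFintype (Fin P.card → {x // x ∈ P})).bind fun g =>
      PMF.uniformOfFinset
        ((Finset.univ.image fun i => ((g i : {x // x ∈ P}) : BitString n)).filter fun x =>
          ∀ y ∈ Finset.univ.image fun i => ((g i : {x // x ∈ P}) : BitString n), c y P ≤ c x P)
        (by
          have hne : (Finset.univ.image fun i => ((g i : {x // x ∈ P}) : BitString n)).Nonempty := by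
            refine ⟨(g ⟨0, Finset.card_pos.mpr h⟩ : {x // x ∈ P}), ?_⟩
            exact Finset.mem_image.mpr ⟨⟨0, Finset.card_pos.mpr h⟩, Finset.mem_univ _, rfl⟩
          obtain ⟨b, hb, hmax⟩ :=
            Finset.exists_max_image _ (fun x => c x P) hne
          exact ⟨b, Finset.mem_filter.mpr ⟨hb, hmax⟩⟩)
  else PMF.pure (defaultBS n)

/-- Exponential ranking scheme: probability of selecting the `i`-th ranked individual
(1-indexed) in a population of size `μ`. -/
def rExp (i μ : ℕ) : ℝ≥0∞ :=
  (2 : ℝ≥0∞)⁻¹ ^ i / ∑ j ∈ Finset.Icc 1 μ, (2 : ℝ≥0∞)⁻¹ ^ j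

/-- Power-law ranking scheme. -/
def rPow (i μ : ℕ) : ℝ≥0∞ :=
  ((i : ℝ≥0∞) ^ 2)⁻¹ / ∑ j ∈ Finset.Icc 1 μ, ((j : ℝ≥0∞) ^ 2)⁻¹

/-- Harmonic ranking scheme. -/
def rHarm (i μ : ℕ) : ℝ≥0∞ :=
  (i : ℝ≥0∞)⁻¹ / ∑ j ∈ Finset.Icc 1 μ, (j : ℝ≥0∞)⁻¹


/-- `select` implements a rank-based parent-selection scheme with rank probabilities
`r i μ` (1-indexed rank `i`, population size `μ`) with respect to the diversity
contribution `c`, for some non-increasing ordering of the population by `c`. -/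
def implementsRankScheme {n : ℕ} {α : Type*} [Preorder α]
    (c : BitString n → Finset (BitString n) → α) (r : ℕ → ℕ → ℝ≥0∞)
    (select : Finset (BitString n) → PMF (BitString n)) : Prop :=
  ∀ P : Finset (BitString n), P.Nonempty →
    ∃ l : List (BitString n), l.Nodup ∧ l.toFinset = P ∧
      l.Chain' (fun a b => c b P ≤ c a P) ∧
      (∀ i : Fin l.length, select P (l.get i) = r (i.val + 1) P.card) ∧
      (∀ x : BitString n, x ∉ P → select P x = 0)

/-- The Pareto-optimal point `1^i 0^(n-i)` of LOTZ. -/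
def opt (n i : ℕ) : BitString n := fun t => decide ((t : ℕ) < i)

/-- The whole Pareto set of LOTZ as a population. -/
def frontSet (n : ℕ) : Finset (BitString n) := (Finset.range (n + 1)).image (opt n)

/-- `P` has a gap at position `i`. -/
def hasGapAt {n : ℕ} (P : Finset (BitString n)) (i : ℕ) : Prop :=
  opt n i ∉ P ∧ (∃ j, j < i ∧ opt n j ∈ P) ∧ (∃ k, i < k ∧ k ≤ n ∧ opt n k ∈ P)

/-- `P` has a gap at some position `i` with `n/4 ≤ i ≤ 3n/4`. -/
def gapInRange (n : ℕ) (P : Finset (BitString n)) : Prop :=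
  ∃ i : ℕ, n ≤ 4 * i ∧ 4 * i ≤ 3 * n ∧ hasGapAt P i

/-- `P` contains both `0^n` and `1^n`. -/
def bothExtremes (n : ℕ) (P : Finset (BitString n)) : Prop :=
  allZeros n ∈ P ∧ allOnes n ∈ P

/-- The chain stopped (frozen) as soon as `cond` holds. -/
def stopWhen {S : Type*} (cond : S → Prop) (st : S → PMF S) (s : S) : PMF S :=
  if cond s then PMF.pure s else st s

/-! For both functions `f₁ + f₂ ≤ n`, with equality on the Pareto front, and a Pareto-optimal
`x ∉ {0ⁿ, 1ⁿ}` with `f x = (a, b)` has Pareto-optimal Hamming neighbours with exactly the two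
values `(a - 1, b + 1)` and `(a + 1, b - 1)` (so `a, b ≥ 1`). In a mutually non-dominated
population the only member that can have first objective `a - 1` is one with value
`(a - 1, b + 1)`, so the gap between `x` and its predecessor in the first objective is `1` if that
value is attained and at least `2` otherwise (also when the predecessor is the reference
coordinate `r₁ ≤ -1 ≤ a - 2`); symmetrically in the second objective. HVC is the product of the
two gaps: both are `1` when `x` is bad, and one of them is at least `2` when `x` is good. -/

section PredValue

variable {α : Type*} (g : α → ℤ) (d : ℤ) (P : Finset α) (x : α)

/-- `f₁(x_{i-1})` in the formula for HVC (with `g = f₁`, `d = r₁`); for mutually non-dominated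
points, `f₂(x_{i+1})` is the same with `g = f₂`, `d = r₂`. -/
def predValue : ℤ :=
  WithBot.unbotD d (((P.filter fun z => g z < g x).image g).max)

variable {g d P x}

lemma predValue_le {m : ℤ} (hd : d ≤ m) (h : ∀ z ∈ P, g z < g x → g z ≤ m) :
    predValue g d P x ≤ m := by
  rw [predValue, WithBot.unbotD_le_iff fun _ => hd, Finset.max_le_iff]
  intro a ha
  obtain ⟨z, hz, rfl⟩ := Finset.mem_image.mp ha
  exact WithBot.coe_le_coe.mpr (h z (Finset.mem_filter.mp hz).1 (Finset.mem_filter.mp hz).2)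

lemma predValue_eq_of_mem {z : α} (hz : z ∈ P) (h : g z = g x - 1) :
    predValue g d P x = g x - 1 := by
  have hmax : ((P.filter fun z => g z < g x).image g).max = ↑(g x - 1) := by
    refine le_antisymm (Finset.max_le fun a ha => ?_) ?_
    · obtain ⟨w, hw, rfl⟩ := Finset.mem_image.mp ha
      exact WithBot.coe_le_coe.mpr (Int.le_sub_one_of_lt (Finset.mem_filter.mp hw).2)
    · rw [← h]
      exact Finset.le_max (Finset.mem_image_of_mem g (Finset.mem_filter.mpr ⟨hz, by omega⟩))
  rw [predValue, hmax, WithBot.unbotD_coe]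

end PredValue

section Hypervolume

variable {n : ℕ} {f : BitString n → ℤ × ℤ} {r : ℤ × ℤ} {P : Finset (BitString n)}
  {x z : BitString n}

lemma hvc_eq_mul : HVC f r x P =
    ((f x).1 - predValue (fun z => (f z).1) r.1 P x) *
      ((f x).2 - predValue (fun z => (f z).2) r.2 P x) :=
  rfl

lemma hvc_eq_one (hfst : ∃ z ∈ P, (f z).1 = (f x).1 - 1) (hsnd : ∃ z ∈ P, (f z).2 = (f x).2 - 1) :
    HVC f r x P = 1 := by
  obtain ⟨z, hz, hz1⟩ := hfst
  obtain ⟨w, hw, hw2⟩ := hsnd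
  rw [hvc_eq_mul, predValue_eq_of_mem hz hz1, predValue_eq_of_mem hw hw2]
  ring

lemma snd_eq_of_fst_eq_sub_one (hP : mutuallyNonDominated f P) (hx : x ∈ P) (hz : z ∈ P)
    (hsum : (f z).1 + (f z).2 ≤ (f x).1 + (f x).2) (h : (f z).1 = (f x).1 - 1) :
    (f z).2 = (f x).2 + 1 := by
  have hdom := hP z hz x hx
  simp only [dominates, not_and, not_not] at hdom
  by_contra hne
  have := congrArg Prod.fst (hdom (by omega) (by omega))
  omega

lemma fst_eq_of_snd_eq_sub_one (hP : mutuallyNonDominated f P) (hx : x ∈ P) (hz : z ∈ P)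
    (hsum : (f z).1 + (f z).2 ≤ (f x).1 + (f x).2) (h : (f z).2 = (f x).2 - 1) :
    (f z).1 = (f x).1 + 1 := by
  have hdom := hP z hz x hx
  simp only [dominates, not_and, not_not] at hdom
  by_contra hne
  have := congrArg Prod.snd (hdom (by omega) (by omega))
  omega

lemma one_lt_hvc (hP : mutuallyNonDominated f P) (hx : x ∈ P)
    (hsum : ∀ z ∈ P, (f z).1 + (f z).2 ≤ (f x).1 + (f x).2)
    (hr1 : r.1 + 2 ≤ (f x).1) (hr2 : r.2 + 2 ≤ (f x).2)
    (hfree : (∀ z ∈ P, f z ≠ ((f x).1 - 1, (f x).2 + 1)) ∨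
      (∀ z ∈ P, f z ≠ ((f x).1 + 1, (f x).2 - 1))) :
    1 < HVC f r x P := by
  have h1 : predValue (fun z => (f z).1) r.1 P x ≤ (f x).1 - 1 :=
    predValue_le (by omega) fun _ _ => Int.le_sub_one_of_lt
  have h2 : predValue (fun z => (f z).2) r.2 P x ≤ (f x).2 - 1 :=
    predValue_le (by omega) fun _ _ => Int.le_sub_one_of_lt
  rw [hvc_eq_mul]
  rcases hfree with hfree | hfree
  · have h1' : predValue (fun z => (f z).1) r.1 P x ≤ (f x).1 - 2 :=
      predValue_le (by omega) fun z hz hlt => by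
        by_contra hge
        have h2z := snd_eq_of_fst_eq_sub_one hP hx hz (hsum z hz) (by omega)
        exact hfree z hz (Prod.ext (by simp only; omega) h2z)
    nlinarith
  · have h2' : predValue (fun z => (f z).2) r.2 P x ≤ (f x).2 - 2 :=
      predValue_le (by omega) fun z hz hlt => by
        by_contra hge
        have h1z := fst_eq_of_snd_eq_sub_one hP hx hz (hsum z hz) (by omega)
        exact hfree z hz (Prod.ext h1z (by simp only; omega))
    nlinarith

def paretoNeighbourValues (f : BitString n → ℤ × ℤ) (x : BitString n) : Set (ℤ × ℤ) :=
  f '' {y | hammingNeighbour x y ∧ paretoOptimal f y}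

lemma hvc_eq_one_of_isBad
    (hnb : paretoNeighbourValues f x = {((f x).1 - 1, (f x).2 + 1), ((f x).1 + 1, (f x).2 - 1)})
    (hbad : isBad f P x) : HVC f r x P = 1 := by
  have attained : ∀ v ∈ paretoNeighbourValues f x, ∃ z ∈ P, f z = v := by
    rintro _ ⟨y, ⟨hy, hyo⟩, rfl⟩
    by_contra! h
    exact hbad.2 ⟨y, hy, hyo, h⟩
  obtain ⟨z, hz, hzv⟩ := attained _ (hnb ▸ Set.mem_insert _ _)
  obtain ⟨w, hw, hwv⟩ := attained _ (hnb ▸ Set.mem_insert_of_mem _ (Set.mem_singleton _))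
  exact hvc_eq_one ⟨z, hz, by rw [hzv]⟩ ⟨w, hw, by rw [hwv]⟩

lemma one_lt_hvc_of_isGood (hP : mutuallyNonDominated f P) (hx : x ∈ P)
    (hsum : ∀ z ∈ P, (f z).1 + (f z).2 ≤ (f x).1 + (f x).2)
    (hnonneg : ∀ z, 0 ≤ (f z).1 ∧ 0 ≤ (f z).2) (hr1 : r.1 ≤ -1) (hr2 : r.2 ≤ -1)
    (hnb : paretoNeighbourValues f x = {((f x).1 - 1, (f x).2 + 1), ((f x).1 + 1, (f x).2 - 1)})
    (hgood : isGood f P x) : 1 < HVC f r x P := by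
  obtain ⟨-, y, hy, hyo, hfree⟩ := hgood
  obtain ⟨w, -, hw⟩ : ((f x).1 - 1, (f x).2 + 1) ∈ paretoNeighbourValues f x :=
    hnb ▸ Set.mem_insert _ _
  obtain ⟨u, -, hu⟩ : ((f x).1 + 1, (f x).2 - 1) ∈ paretoNeighbourValues f x :=
    hnb ▸ Set.mem_insert_of_mem _ (Set.mem_singleton _)
  have hw1 : 0 ≤ (f x).1 - 1 := by simpa [hw] using (hnonneg w).1
  have hu2 : 0 ≤ (f x).2 - 1 := by simpa [hu] using (hnonneg u).2
  have hfy : f y ∈ paretoNeighbourValues f x := ⟨y, ⟨hy, hyo⟩, rfl⟩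
  rw [hnb] at hfy
  refine one_lt_hvc hP hx hsum (by omega) (by omega) ?_
  rcases hfy with h | h
  · exact .inl fun z hz => h ▸ hfree z hz
  · exact .inr fun z hz => (Set.mem_singleton_iff.mp h) ▸ hfree z hz

end Hypervolume

section Fronts

variable {n : ℕ}

lemma paretoOptimal_of_fst_add_snd_eq {f : BitString n → ℤ × ℤ} {m : ℤ} {x : BitString n}
    (hle : ∀ z, (f z).1 + (f z).2 ≤ m) (hx : (f x).1 + (f x).2 = m) : paretoOptimal f x := by
  rintro ⟨y, h1, h2, hne⟩
  have := hle y
  exact hne (Prod.ext (by omega) (by omega))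

lemma flipBit_apply_of_ne (x : BitString n) {p j : Fin n} (h : j ≠ p) : flipBit x p j = x j :=
  Function.update_of_ne h _ _

lemma onesCount_le (x : BitString n) : onesCount x ≤ n :=
  (Finset.card_filter_le _ _).trans_eq (Finset.card_fin n)

lemma onesCount_flipBit (x : BitString n) (p : Fin n) :
    (onesCount (flipBit x p) : ℤ) = onesCount x + if x p then -1 else 1 := by
  unfold onesCount flipBit
  cases hp : x p
  · rw [show (Finset.univ.filter fun i => Function.update x p (!false) i = true) =
        insert p (Finset.univ.filter fun i => x i = true) by
      ext i; by_cases hi : i = p <;> simp [Function.update_apply, hi, hp]]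
    rw [Finset.card_insert_of_notMem (by simp [hp])]
    simp
  · rw [show (Finset.univ.filter fun i => Function.update x p (!true) i = true) =
        (Finset.univ.filter fun i => x i = true).erase p by
      ext i; by_cases hi : i = p <;> simp [Function.update_apply, hi, hp]]
    rw [Finset.card_erase_of_mem (by simp [hp]), Nat.cast_sub (Finset.card_pos.mpr ⟨p, by simp [hp]⟩)]
    simp [sub_eq_add_neg]

lemma oneMinMax_fst_add_snd (x : BitString n) : (OneMinMax x).1 + (OneMinMax x).2 = n := by
  simp [OneMinMax]

lemma paretoOptimal_oneMinMax (x : BitString n) : paretoOptimal OneMinMax x :=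
  paretoOptimal_of_fst_add_snd_eq (fun z => (oneMinMax_fst_add_snd z).le) (oneMinMax_fst_add_snd x)

lemma oneMinMax_flipBit (x : BitString n) (p : Fin n) :
    OneMinMax (flipBit x p) =
      if x p then ((OneMinMax x).1 - 1, (OneMinMax x).2 + 1)
      else ((OneMinMax x).1 + 1, (OneMinMax x).2 - 1) := by
  simp only [OneMinMax, onesCount_flipBit]
  cases x p <;> simp only [Bool.false_eq_true, if_false, if_true] <;> ext <;> simp only <;> ring

lemma paretoNeighbourValues_oneMinMax {x : BitString n} (hx0 : x ≠ allZeros n)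
    (hx1 : x ≠ allOnes n) :
    paretoNeighbourValues OneMinMax x =
      {((OneMinMax x).1 - 1, (OneMinMax x).2 + 1), ((OneMinMax x).1 + 1, (OneMinMax x).2 - 1)} := by
  ext v
  simp only [paretoNeighbourValues, hammingNeighbour, Set.mem_image, Set.mem_ofPred_eq,
    Set.mem_insert_iff, Set.mem_singleton_iff]
  constructor
  · rintro ⟨y, ⟨⟨p, rfl⟩, -⟩, rfl⟩
    rw [oneMinMax_flipBit]
    cases x p <;> simp
  · rintro (rfl | rfl)
    · obtain ⟨p, hp⟩ : ∃ p, x p = true := by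
        by_contra! h
        exact hx0 (funext fun i => by simpa [allZeros] using h i)
      exact ⟨flipBit x p, ⟨⟨p, rfl⟩, paretoOptimal_oneMinMax _⟩, by rw [oneMinMax_flipBit, if_pos hp]⟩
    · obtain ⟨p, hp⟩ : ∃ p, x p = false := by
        by_contra! h
        exact hx1 (funext fun i => by simpa [allOnes] using h i)
      exact ⟨flipBit x p, ⟨⟨p, rfl⟩, paretoOptimal_oneMinMax _⟩, by simp [oneMinMax_flipBit, hp]⟩

lemma leadingOnes_add_trailingZeros_le (x : BitString n) :
    leadingOnes x + trailingZeros x ≤ n := by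
  rw [leadingOnes, trailingZeros, ← Finset.card_union_of_disjoint]
  · exact (Finset.card_le_univ _).trans_eq (Fintype.card_fin n)
  · refine Finset.disjoint_filter.mpr fun i _ hlo htz => ?_
    simpa [hlo i le_rfl] using htz i le_rfl

lemma lotz_fst_add_snd_le (x : BitString n) : (LOTZ x).1 + (LOTZ x).2 ≤ n := by
  simp only [LOTZ]
  exact_mod_cast leadingOnes_add_trailingZeros_le x

lemma leadingOnes_opt {k : ℕ} (hk : k ≤ n) : leadingOnes (opt n k) = k := by
  have hset : (Finset.univ.filter fun i : Fin n => ∀ j, j ≤ i → opt n k j = true) =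
      Finset.univ.filter fun i : Fin n => (i : ℕ) < k := by
    refine Finset.filter_congr fun i _ => ?_
    simp only [opt, decide_eq_true_eq]
    exact ⟨fun h => h i le_rfl, fun h j hj => lt_of_le_of_lt hj h⟩
  rw [leadingOnes, hset, Fin.card_filter_val_lt, min_eq_right hk]

lemma trailingZeros_opt {k : ℕ} (hk : k ≤ n) : trailingZeros (opt n k) = n - k := by
  have hsplit := Finset.card_filter_add_card_filter_not (s := (Finset.univ : Finset (Fin n)))
    fun i => (i : ℕ) < k
  rw [Fin.card_filter_val_lt, min_eq_right hk, Finset.card_univ, Fintype.card_fin] at hsplit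
  have hset : (Finset.univ.filter fun i : Fin n => ∀ j, i ≤ j → opt n k j = false) =
      Finset.univ.filter fun i : Fin n => ¬(i : ℕ) < k := by
    refine Finset.filter_congr fun i _ => ?_
    simp only [opt, decide_eq_false_iff_not, not_lt]
    exact ⟨fun h => h i le_rfl, fun h j hj => h.trans hj⟩
  rw [trailingZeros, hset]
  omega

lemma lotz_opt {k : ℕ} (hk : k ≤ n) : LOTZ (opt n k) = ((k : ℤ), (n : ℤ) - k) := by
  simp [LOTZ, leadingOnes_opt hk, trailingZeros_opt hk, Nat.cast_sub hk]

lemma leadingOnes_le_of_eq_false {x : BitString n} {j : Fin n} (h : x j = false) :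
    leadingOnes x ≤ j := by
  rw [leadingOnes, ← Fin.card_Iio j]
  refine Finset.card_le_card fun i hi => Finset.mem_Iio.mpr (lt_of_not_ge fun hji => ?_)
  simp [(Finset.mem_filter.mp hi).2 j hji] at h

lemma trailingZeros_add_lt_of_eq_true {x : BitString n} {j : Fin n} (h : x j = true) :
    trailingZeros x + j < n := by
  have hle : trailingZeros x ≤ (Finset.Ioi j).card := by
    refine Finset.card_le_card fun i hi => Finset.mem_Ioi.mpr (lt_of_not_ge fun hij => ?_)
    simp [(Finset.mem_filter.mp hi).2 j hij] at h
  rw [Fin.card_Ioi] at hle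
  omega

lemma eq_opt_of_leadingOnes_add_trailingZeros_eq {x : BitString n}
    (h : leadingOnes x + trailingZeros x = n) : x = opt n (leadingOnes x) := by
  funext j
  cases hj : x j
  · simpa [opt] using leadingOnes_le_of_eq_false hj
  · have := trailingZeros_add_lt_of_eq_true hj
    simp only [opt, true_eq_decide_iff]
    omega

lemma leadingOnes_add_trailingZeros_of_paretoOptimal {x : BitString n}
    (h : paretoOptimal LOTZ x) : leadingOnes x + trailingZeros x = n := by
  by_contra hne
  have hlt := lt_of_le_of_ne (leadingOnes_add_trailingZeros_le x) hne
  have hle := Nat.sub_le n (trailingZeros x)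
  refine h ⟨opt n (n - trailingZeros x), ?_, ?_, fun heq => ?_⟩
  · simp only [LOTZ, leadingOnes_opt hle]
    omega
  · simp only [LOTZ, trailingZeros_opt hle]
    omega
  · have := congrArg Prod.fst heq
    simp only [LOTZ, leadingOnes_opt hle] at this
    omega

lemma paretoOptimal_lotz_iff {x : BitString n} : paretoOptimal LOTZ x ↔ ∃ k ≤ n, x = opt n k := by
  refine ⟨fun h => ?_, ?_⟩
  · have hsum := leadingOnes_add_trailingZeros_of_paretoOptimal h
    exact ⟨leadingOnes x, by omega, eq_opt_of_leadingOnes_add_trailingZeros_eq hsum⟩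
  · rintro ⟨k, hk, rfl⟩
    refine paretoOptimal_of_fst_add_snd_eq lotz_fst_add_snd_le ?_
    simp [lotz_opt hk]

lemma flipBit_flipBit (x : BitString n) (p : Fin n) : flipBit (flipBit x p) p = x := by
  simp [flipBit]

lemma flipBit_opt (p : Fin n) : flipBit (opt n p) p = opt n (p + 1) := by
  funext j
  by_cases hj : j = p
  · subst hj
    simp [flipBit, opt]
  · rw [flipBit_apply_of_ne _ hj]
    have := Fin.val_ne_of_ne hj
    simp only [opt, decide_eq_decide]
    omega

lemma flipBit_opt_succ (p : Fin n) : flipBit (opt n (p + 1)) p = opt n p := by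
  rw [← flipBit_opt, flipBit_flipBit]

/-- `opt n i` and `opt n k` differ exactly at the positions `min i k, …, max i k - 1`, and at
least two of these are distinct unless `i` and `k` are adjacent. -/
lemma eq_add_one_or_add_one_eq_of_flipBit_opt {i k : ℕ} (hi : i ≤ n) (hk : k ≤ n) {p : Fin n}
    (h : flipBit (opt n i) p = opt n k) : k = i + 1 ∨ k + 1 = i := by
  have only_p : ∀ j : Fin n, ¬((j : ℕ) < k ↔ (j : ℕ) < i) → (j : ℕ) = p := by
    intro j hj
    by_contra hjp
    have := congrFun h j
    rw [flipBit_apply_of_ne _ (fun hjp' => hjp (congrArg Fin.val hjp'))] at this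
    simp only [opt, decide_eq_decide] at this
    exact hj this.symm
  have hki : k ≠ i := by
    rintro rfl
    have := congrFun h p
    simp [flipBit] at this
  rcases Nat.lt_or_gt_of_ne hki with hlt | hgt
  · have h1 := only_p ⟨k, by omega⟩ (by simp only; omega)
    have h2 := only_p ⟨i - 1, by omega⟩ (by simp only; omega)
    simp only at h1 h2
    omega
  · have h1 := only_p ⟨i, by omega⟩ (by simp only; omega)
    have h2 := only_p ⟨k - 1, by omega⟩ (by simp only; omega)
    simp only at h1 h2
    omega

lemma paretoNeighbourValues_lotz_opt {i : ℕ} (hi0 : i ≠ 0) (hin : i < n) :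
    paretoNeighbourValues LOTZ (opt n i) =
      {((LOTZ (opt n i)).1 - 1, (LOTZ (opt n i)).2 + 1),
        ((LOTZ (opt n i)).1 + 1, (LOTZ (opt n i)).2 - 1)} := by
  ext v
  simp only [paretoNeighbourValues, hammingNeighbour, Set.mem_image, Set.mem_ofPred_eq,
    Set.mem_insert_iff, Set.mem_singleton_iff, lotz_opt hin.le]
  constructor
  · rintro ⟨y, ⟨⟨p, rfl⟩, hyo⟩, rfl⟩
    obtain ⟨k, hk, hyk⟩ := paretoOptimal_lotz_iff.mp hyo
    rw [hyk, lotz_opt hk]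
    rcases eq_add_one_or_add_one_eq_of_flipBit_opt hin.le hk hyk with rfl | rfl
    · right
      ext <;> push_cast <;> ring
    · left
      ext <;> push_cast <;> ring
  · obtain ⟨j, rfl⟩ := Nat.exists_eq_add_one_of_ne_zero hi0
    rintro (rfl | rfl)
    · refine ⟨opt n j, ⟨⟨⟨j, by omega⟩, (flipBit_opt_succ ⟨j, by omega⟩).symm⟩,
        paretoOptimal_lotz_iff.mpr ⟨j, by omega, rfl⟩⟩, ?_⟩
      rw [lotz_opt (by omega)]
      ext <;> push_cast <;> ring
    · refine ⟨opt n (j + 2), ⟨⟨⟨j + 1, hin⟩, (flipBit_opt ⟨j + 1, hin⟩).symm⟩,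
        paretoOptimal_lotz_iff.mpr ⟨j + 2, by omega, rfl⟩⟩, ?_⟩
      rw [lotz_opt (by omega)]
      ext <;> push_cast <;> ring

end Fronts

section OneMinMaxOrLOTZ

variable {n : ℕ} {f : BitString n → ℤ × ℤ}

lemma fst_nonneg_and_snd_nonneg (hf : f = OneMinMax ∨ f = LOTZ) (z : BitString n) :
    0 ≤ (f z).1 ∧ 0 ≤ (f z).2 := by
  rcases hf with rfl | rfl
  · simpa [OneMinMax] using onesCount_le z
  · simp [LOTZ]

lemma fst_add_snd_le_of_paretoOptimal (hf : f = OneMinMax ∨ f = LOTZ) {x : BitString n}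
    (hx : paretoOptimal f x) (z : BitString n) :
    (f z).1 + (f z).2 ≤ (f x).1 + (f x).2 := by
  rcases hf with rfl | rfl
  · rw [oneMinMax_fst_add_snd, oneMinMax_fst_add_snd]
  · obtain ⟨k, hk, rfl⟩ := paretoOptimal_lotz_iff.mp hx
    simpa [lotz_opt hk] using lotz_fst_add_snd_le z

lemma paretoNeighbourValues_eq (hf : f = OneMinMax ∨ f = LOTZ) {x : BitString n}
    (hx : paretoOptimal f x) (hx0 : x ≠ allZeros n) (hx1 : x ≠ allOnes n) :
    paretoNeighbourValues f x = {((f x).1 - 1, (f x).2 + 1), ((f x).1 + 1, (f x).2 - 1)} := by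
  rcases hf with rfl | rfl
  · exact paretoNeighbourValues_oneMinMax hx0 hx1
  · obtain ⟨k, hk, rfl⟩ := paretoOptimal_lotz_iff.mp hx
    refine paretoNeighbourValues_lotz_opt (fun hk0 => hx0 ?_) (lt_of_le_of_ne hk fun hkn => hx1 ?_)
    · funext j
      simp [opt, allZeros, hk0]
    · funext j
      simp [opt, allOnes, hkn]

end OneMinMaxOrLOTZ

/-- For OneMinMax and LOTZ, with any reference point dominated by `(-1,-1)`,
the hypervolume contribution is diversity-favouring on `{0,1}ⁿ \ {0ⁿ, 1ⁿ}`: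
bad non-extreme points have HVC exactly 1, good non-extreme points have HVC > 1. -/
theorem hvc_diversity_favouring (n : ℕ) (f : BitString n → ℤ × ℤ)
    (hf : f = OneMinMax ∨ f = LOTZ) (r : ℤ × ℤ) (hr1 : r.1 ≤ -1) (hr2 : r.2 ≤ -1)
    (P : Finset (BitString n)) (hP : mutuallyNonDominated f P)
    (x y : BitString n) (hx : x ∈ P) (hy : y ∈ P)
    (hxo : paretoOptimal f x) (hyo : paretoOptimal f y)
    (hx0 : x ≠ allZeros n) (hx1 : x ≠ allOnes n)
    (hy0 : y ≠ allZeros n) (hy1 : y ≠ allOnes n) :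
    (isBad f P x → HVC f r x P = 1) ∧
    (isGood f P y → 1 < HVC f r y P) ∧
    (isBad f P x → isGood f P y → HVC f r x P < HVC f r y P) := by
  have hvc : ∀ w ∈ P, paretoOptimal f w → w ≠ allZeros n → w ≠ allOnes n →
      (isBad f P w → HVC f r w P = 1) ∧ (isGood f P w → 1 < HVC f r w P) := by
    intro w hw hwo hw0 hw1
    have hnb := paretoNeighbourValues_eq hf hwo hw0 hw1
    exact ⟨hvc_eq_one_of_isBad hnb,
      one_lt_hvc_of_isGood hP hw (fun z _ => fst_add_snd_le_of_paretoOptimal hf hwo z)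
        (fst_nonneg_and_snd_nonneg hf) hr1 hr2 hnb⟩
  have hbad := (hvc x hx hxo hx0 hx1).1
  have hgood := (hvc y hy hyo hy0 hy1).2
  exact ⟨hbad, hgood, fun hb hg => (hbad hb).trans_lt (hgood hg)⟩

end EMO
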